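/- arXiv:2406.00221 — 5 statements merged into one kernel-verified Lean document; each statement's English description precedes it below -/
import Mathlib

section
/- Let P be a string of length m with period p, let Q = P[q+1..m] be a suffix of P with |Q| ≥ p, and let p' be a divisor of p that is a period of Q. Then p' is a period of P. -/
/-- `S` has period `p` (1-based: `S[i+p] = S[i]` for all `1 ≤ i ≤ n-p`). -/
def HasPeriod (S : List ℤ) (p : ℕ) : Prop :=
  1 ≤ p ∧ p ≤ S.length ∧ ∀ i : ℕ, i + p < S.length → S[i]! = S[i + p]!

/-- The shortest period `p(S)` of a string `S`. -/
noncomputable def minPeriod (S : List ℤ) : ℕ :=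
  sInf {p | HasPeriod S p}

/-- `W^t`: concatenation of `t` copies of `W`. -/
def listPow (W : List ℤ) (t : ℕ) : List ℤ :=
  (List.replicate t W).flatten

/-- If `P[1..m]` has period `p`, `Q = P[q+1..m]` is a suffix with `|Q| ≥ p`,
and `p'` divides `p` and is a period of `Q`, then `p'` is a period of `P`. -/
theorem period_of_suffix_extends (P : List ℤ) (p : ℕ) (hp : HasPeriod P p)
    (q : ℕ) (hq : p ≤ P.length - q)
    (p' : ℕ) (hdvd : p' ∣ p) (hp' : HasPeriod (P.drop q) p') :
    HasPeriod P p' := by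
  obtain ⟨hp1, hpm, hpP⟩ := hp
  obtain ⟨hp'1, hp'len, hp'Q⟩ := hp'
  rw [List.length_drop] at hp'len
  have hqm : q + p ≤ P.length := by omega
  have hdg : ∀ j, q + j < P.length → (P.drop q)[j]! = P[q+j]! := by
    intro j hj
    rw [getElem!_pos, getElem!_pos, List.getElem_drop] <;> simp <;> omega
  -- period p' inside Q, phrased on P
  have hQ : ∀ a, q ≤ a → a + p' < P.length → P[a]! = P[a + p']! := by
    intro a ha hlt
    have h := hp'Q (a - q) (by rw [List.length_drop]; omega)
    rw [hdg, hdg] at h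
    · have e1 : q + (a - q) = a := by omega
      have e2 : q + (a - q + p') = a + p' := by omega
      rwa [e1, e2] at h
    · omega
    · omega
  have step : ∀ t a, q ≤ a → a + t * p' < P.length → P[a]! = P[a + t * p']! := by
    intro t
    induction t with
    | zero => intro a _ _; simp
    | succ t ih =>
      intro a ha hlt
      have hsm : (t + 1) * p' = t * p' + p' := Nat.succ_mul t p'
      have h1 : P[a]! = P[a + p']! := hQ a ha (by linarith [Nat.zero_le (t * p')])
      have h2 : P[a + p']! = P[a + p' + t * p']! := ih (a + p') (by omega) (by linarith [Nat.zero_le (t * p')])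
      have e : a + p' + t * p' = a + (t + 1) * p' := by ring
      rw [h1, h2, e]
  obtain ⟨k, hk⟩ := hdvd
  have hk1 : 1 ≤ k := by
    rcases Nat.eq_zero_or_pos k with h | h
    · simp [h] at hk; omega
    · exact h
  have main : ∀ d i, q - i ≤ d → i + p' < P.length → P[i]! = P[i + p']! := by
    intro d
    induction d with
    | zero =>
      intro i hd hlt
      exact hQ i (by omega) hlt
    | succ d ih =>
      intro i hd hlt
      by_cases hiq : q ≤ i
      · exact hQ i hiq hlt
      · push_neg at hiq
        by_cases hmid : q ≤ i + p'
        · -- P[i] = P[i+p], P[i+p'] = P[i+p'+(k-1)p'] = P[i+p]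
          have hip : i + p < P.length := by omega
          have h1 : P[i]! = P[i + p]! := hpP i hip
          have e : i + p' + (k - 1) * p' = i + p := by
            have : (k - 1) * p' = k * p' - p' := by
              cases k with
              | zero => omega
              | succ n => simp [Nat.succ_mul]
            rw [this]
            have hpk : p = p' * k := hk
            have : p' ≤ k * p' := Nat.le_mul_of_pos_left p' (by omega)
            have hcomm : p' * k = k * p' := Nat.mul_comm _ _
            omega
          have h2 : P[i + p']! = P[i + p]! := by
            have := step (k - 1) (i + p') hmid (by rw [e]; exact hip)
            rwa [e] at this
          rw [h1, ← h2]
        · push_neg at hmid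
          have h1 : P[i]! = P[i + p]! := hpP i (by omega)
          have h2 : P[i + p']! = P[i + p' + p]! := hpP (i + p') (by omega)
          have h3 : P[i + p]! = P[i + p + p']! := ih (i + p) (by omega) (by omega)
          have e : i + p' + p = i + p + p' := by ring
          rw [h1, h2, e, h3]
  refine ⟨hp'1, by omega, fun i hi => main q i (by omega) hi⟩
end

section
/- Let Q be a string with period p, where p ≤ |Q|, let S be a prefix of Q with |S| ≥ p, and let p'' be a period of S that divides p. Then p'' is a period of Q. -/
/-- If `Q` has period `p`, `S = Q[1..ℓ]` is a prefix with `|S| ≥ p`,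
and `p''` is a period of `S` dividing `p`, then `p''` is a period of `Q`. -/
theorem period_of_prefix_extends (Q : List ℤ) (p : ℕ) (hp : HasPeriod Q p)
    (ℓ : ℕ) (hℓ : p ≤ ℓ)
    (p'' : ℕ) (hdvd : p'' ∣ p) (hp'' : HasPeriod (Q.take ℓ) p'') :
    HasPeriod Q p'' := by
  obtain ⟨hp1, hpn, hQ⟩ := hp
  obtain ⟨h1, hlen, hS⟩ := hp''
  have hp''p : p'' ≤ p := Nat.le_of_dvd hp1 hdvd
  refine ⟨h1, le_trans hp''p hpn, ?_⟩
  have htake : ∀ j : ℕ, j < ℓ → j < Q.length → (Q.take ℓ)[j]! = Q[j]! := by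
    intro j hj hjn
    rw [getElem!_pos (Q.take ℓ) j (by simp; omega), getElem!_pos Q j hjn, List.getElem_take]
  intro i hi
  induction i using Nat.strong_induction_on with
  | _ i IH =>
    by_cases hcase : i + p'' < p
    · have h := hS i (by simp; omega)
      rw [htake i (by omega) (by omega), htake (i + p'') (by omega) (by omega)] at h
      exact h
    · obtain ⟨k, hk⟩ := hdvd
      have hkm : p = (k - 1) * p'' + p'' := by
        cases k with
        | zero => simp at hk; omega
        | succ m => simp only [Nat.succ_sub_one]; rw [hk]; ring
      set j := i + p'' - p with hjdef
      have hjp : j + p = i + p'' := by omega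
      have chain : ∀ t : ℕ, j + t * p'' ≤ i → Q[j]! = Q[j + t * p'']! := by
        intro t
        induction t with
        | zero => simp
        | succ t ih =>
          intro ht
          have hsm : (t + 1) * p'' = t * p'' + p'' := by ring
          rw [ih (by omega)]
          have := IH (j + t * p'') (by omega) (by omega)
          rw [this]
          congr 1
          omega
      have hji : j + (k - 1) * p'' = i := by omega
      have hchain := chain (k - 1) (by omega)
      rw [hji] at hchain
      have h2 := hQ j (by omega)
      rw [hjp] at h2
      rw [← hchain, h2]
end

section
/- Let P be a string with shortest period p = p(P), let Q be a suffix of P, and let S be a prefix of Q with |S| ≥ 2p. Then p(S) = p. -/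
lemma hasPeriod_length (P : List ℤ) (hP : P ≠ []) : HasPeriod P P.length :=
  ⟨List.length_pos_iff.mpr hP, le_rfl, fun i h => absurd h (by omega)⟩

lemma minPeriod_mem (P : List ℤ) (hP : P ≠ []) : HasPeriod P (minPeriod P) :=
  Nat.sInf_mem (s := {p | HasPeriod P p})
    ⟨P.length, Set.mem_setOf_eq ▸ hasPeriod_length P hP⟩

lemma minPeriod_le (P : List ℤ) {q : ℕ} (h : HasPeriod P q) : minPeriod P ≤ q :=
  Nat.sInf_le (Set.mem_setOf_eq ▸ h)

lemma per_steps (P : List ℤ) (p : ℕ)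
    (h : ∀ i, i + p < P.length → P[i]! = P[i + p]!) :
    ∀ t a, a + t * p < P.length → P[a]! = P[a + t * p]! := by
  intro t
  induction t with
  | zero => simp
  | succ n ih =>
    intro a ha
    rw [Nat.succ_mul] at ha
    have ha' : a + p + n * p < P.length := by omega
    have h1 : P[a]! = P[a + p]! := h a (by omega)
    have h2 : P[a + p]! = P[a + p + n * p]! := ih (a + p) ha'
    have h3 : a + (n + 1) * p = a + p + n * p := by ring
    rw [h3, h1, h2]

lemma per_cong (P : List ℤ) (p : ℕ) (_hp : 1 ≤ p)
    (h : ∀ i, i + p < P.length → P[i]! = P[i + p]!) :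
    ∀ a b, a < P.length → b < P.length → a % p = b % p → P[a]! = P[b]! := by
  have key : ∀ a b, a ≤ b → b < P.length → a % p = b % p → P[a]! = P[b]! := by
    intro a b hab hb hmod
    obtain ⟨t, ht⟩ := (Nat.modEq_iff_dvd' hab).mp hmod
    rw [mul_comm] at ht
    have hbe : b = a + t * p := by omega
    subst hbe
    exact per_steps P p h t a hb
  intro a b ha hb hmod
  rcases le_total a b with hab | hab
  · exact key a b hab hb hmod
  · exact (key b a hab ha hmod.symm).symm

/-- If `p = p(P)`, `Q` is a suffix of `P`, and `S` is a prefix of `Q` with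
`|S| ≥ 2p`, then `p(S) = p`. -/
theorem minPeriod_prefix_of_suffix (P : List ℤ) (hP : P ≠ [])
    (Q S : List ℤ) (hQ : Q <:+ P) (hS : S <+: Q)
    (hlen : 2 * minPeriod P ≤ S.length) :
    minPeriod S = minPeriod P := by
  set p := minPeriod P with hpdef
  obtain ⟨hp1, hpP, hper⟩ := minPeriod_mem P hP
  obtain ⟨T, hT⟩ := hQ
  obtain ⟨R, hR⟩ := hS
  have hPeq : P = T ++ (S ++ R) := by rw [← hR] at hT; exact hT.symm
  set k := T.length with hk
  have hlenP : P.length = k + S.length + R.length := by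
    rw [hPeq]; simp [hk]; ring
  -- indexing fact
  have hidx : ∀ i, i < S.length → P[k + i]! = S[i]! := by
    intro i hi
    have e1 : P[k + i]? = S[i]? := by
      rw [hPeq, List.getElem?_append_right (by omega : T.length ≤ k + i)]
      have h3 : k + i - T.length = i := by omega
      rw [h3, List.getElem?_append_left hi]
    have h4 : S[i]? = some S[i] := List.getElem?_eq_getElem hi
    rw [List.getElem!_of_getElem? (e1.trans h4), List.getElem!_of_getElem? h4]
  -- S has period p
  have hSper : HasPeriod S p := by
    refine ⟨hp1, by omega, fun i hi => ?_⟩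
    rw [← hidx i (by omega), ← hidx (i + p) hi]
    have : k + (i + p) = (k + i) + p := by ring
    rw [this]
    exact hper (k + i) (by omega)
  have hqle : minPeriod S ≤ p := minPeriod_le S hSper
  set q := minPeriod S with hqdef
  have hSne : S ≠ [] := by
    intro h; rw [h] at hlen; simp at hlen; omega
  obtain ⟨hq1, hqS, hqper⟩ := minPeriod_mem S hSne
  -- P has period q
  have hPq : HasPeriod P q := by
    refine ⟨hq1, by omega, fun i hi => ?_⟩
    set j := k + (i + k * (p - 1)) % p with hj
    have hjlt : (i + k * (p - 1)) % p < p := Nat.mod_lt _ (by omega)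
    have hjmod : j % p = i % p := by
      have hkp : k * p = k * (p - 1) + k := by
        conv_lhs => rw [show p = (p - 1) + 1 by omega]
        rw [Nat.mul_succ]
      have h2 : k + (i + k * (p - 1)) = i + k * p := by omega
      rw [hj, Nat.add_mod_mod, h2, Nat.add_mul_mod_self_right]
    have hjq : j + q < P.length := by omega
    have e1 : P[i]! = P[j]! :=
      per_cong P p hp1 hper i j (by omega) (by omega) (hjmod.symm)
    have e2 : P[j]! = P[j + q]! := by
      have hjk : j - k < S.length := by omega
      have hjkq : (j - k) + q < S.length := by omega
      have a1 : P[j]! = S[j - k]! := by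
        have h : j = k + (j - k) := by omega
        conv_lhs => rw [h]
        exact hidx (j - k) hjk
      have a2 : P[j + q]! = S[(j - k) + q]! := by
        have h : j + q = k + ((j - k) + q) := by omega
        conv_lhs => rw [h]
        exact hidx ((j - k) + q) hjkq
      rw [a1, a2]
      exact hqper (j - k) hjkq
    have e3 : P[j + q]! = P[i + q]! :=
      per_cong P p hp1 hper (j + q) (i + q) (by omega) (by omega)
        (by rw [Nat.add_mod, hjmod, ← Nat.add_mod])
    rw [e1, e2, e3]
  have : p ≤ q := minPeriod_le P hPq
  omega
end

section
/- Let W be a nonempty string, s ≥ 2 an integer, and P a string of length m with a cut position 1 ≤ q < m such that P[1..q] is a suffix of W and P[q+1..m] is a prefix of W^{s−1}. Then for every integer j with 1 ≤ j ≤ s − ⌈(m−q)/|W|⌉, the string P occurs in W^s at position j·|W| − q + 1, that is, (W^s)[j·|W|−q+1 .. j·|W|−q+m] = P. -/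
lemma listPow_length (W : List ℤ) (t : ℕ) : (listPow W t).length = t * W.length := by
  induction t with
  | zero => simp [listPow]
  | succ n ih =>
    unfold listPow at *
    rw [List.replicate_succ, List.flatten_cons, List.length_append, ih]; ring

lemma listPow_add (W : List ℤ) (a b : ℕ) :
    listPow W (a + b) = listPow W a ++ listPow W b := by
  unfold listPow; rw [List.replicate_add, List.flatten_append]


/-- If `P[1..q]` is a suffix of `W` and `P[q+1..m]` is a prefix of `W^{s-1}`, then for
every `1 ≤ j ≤ s - ⌈(m-q)/|W|⌉`, `P` occurs in `W^s` at (1-based) position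
`j·|W| - q + 1`. -/
theorem occurrences_in_run (W : List ℤ) (hW : W ≠ []) (s : ℕ) (hs : 2 ≤ s)
    (P : List ℤ) (q : ℕ) (hq1 : 1 ≤ q) (hqm : q < P.length)
    (hpre : P.take q <:+ W) (hsuf : P.drop q <+: listPow W (s - 1)) :
    ∀ j : ℕ, 1 ≤ j → j ≤ s - (P.length - q + W.length - 1) / W.length →
      ((listPow W s).drop (j * W.length - q)).take P.length = P := by
  intro j hj1 hj2
  obtain ⟨k, rfl⟩ : ∃ k, j = k + 1 := ⟨j - 1, by omega⟩
  have hb : 1 ≤ W.length := List.length_pos_iff.mpr hW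
  set m := P.length with hm
  set b := W.length with hbdef
  set c := (m - q + b - 1) / b with hc
  have hqb : q ≤ b := by
    have h := hpre.length_le
    rw [List.length_take] at h
    omega
  -- ceiling arithmetic
  have hcb : m - q ≤ c * b := by
    have hrw : c = (m - q - 1) / b + 1 := by
      rw [hc]
      have h3 : m - q + b - 1 = (m - q - 1) + b := by omega
      rw [h3, Nat.add_div_right _ hb]
    have h := Nat.div_add_mod (m - q - 1) b
    have h2 := Nat.mod_lt (m - q - 1) hb
    have h4 : m - q - 1 < ((m - q - 1) / b + 1) * b := by nlinarith
    rw [hrw]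
    have h5 : m - q = m - q - 1 + 1 := by omega
    rw [h5]
    exact h4
  have hc1 : 1 ≤ c := by
    rw [hc]
    exact Nat.one_le_div_iff hb |>.mpr (by omega)
  have hjs : k + 1 < s := by omega
  have hsj : c ≤ s - (k + 1) := by omega
  have hsjb : m - q ≤ (s - (k + 1)) * b :=
    le_trans hcb (Nat.mul_le_mul_right b hsj)
  -- suffix: W.drop (b - q) = P.take q
  obtain ⟨C, hC⟩ := hpre
  have hClen : C.length = b - q := by
    have h := congrArg List.length hC
    simp [List.length_take] at h
    omega
  have hWdrop : W.drop (b - q) = P.take q := by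
    rw [← hC, ← hClen, List.drop_left]
  -- split listPow W s
  have hmul : (k + 1) * b = k * b + b := by ring
  have hsplit : listPow W s = listPow W k ++ W ++ listPow W (s - (k + 1)) := by
    have h1 : listPow W (k + 1) = listPow W k ++ W := by
      rw [listPow_add]
      simp [listPow]
    have h2 : listPow W s = listPow W (k + 1) ++ listPow W (s - (k + 1)) := by
      rw [← listPow_add]
      congr 1
      omega
    rw [h2, h1]
  have hlenA : (listPow W k).length = k * b := listPow_length W k
  have hdrop : (listPow W s).drop ((k + 1) * b - q)
      = P.take q ++ listPow W (s - (k + 1)) := by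
    rw [hsplit, List.drop_append, List.drop_append]
    rw [List.drop_eq_nil_of_le (by rw [hlenA]; omega)]
    have e1 : (k + 1) * b - q - (listPow W k).length = b - q := by
      rw [hlenA]; omega
    have e2 : (k + 1) * b - q - (listPow W k ++ W).length = 0 := by
      rw [List.length_append, hlenA]; omega
    rw [e1, e2, hWdrop, List.drop_zero, List.nil_append]
  -- take part
  have htq : (P.take q).length = q := by rw [List.length_take]; omega
  have hBtake : (listPow W (s - (k + 1))).take (m - q) = P.drop q := by
    obtain ⟨D, hD⟩ := hsuf
    have hprefB : listPow W (s - (k + 1)) <+: listPow W (s - 1) := by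
      have h6 : s - 1 = (s - (k + 1)) + (s - 1 - (s - (k + 1))) := by omega
      rw [h6, listPow_add]
      exact List.prefix_append _ _
    obtain ⟨E, hE⟩ := hprefB
    have h1 : (listPow W (s - 1)).take (m - q) = P.drop q := by
      rw [← hD, List.take_append_of_le_length (by rw [List.length_drop])]
      exact List.take_of_length_le (by rw [List.length_drop])
    rw [← hE, List.take_append_of_le_length (by rw [listPow_length]; exact hsjb)] at h1
    exact h1
  rw [hdrop, List.take_append, htq]
  rw [List.take_of_length_le (by rw [htq]; omega), hBtake, List.take_append_drop]
end

section
/- Let W be a nonempty string and let s, t ≥ 2 be integers. Then the shortest periods of the powers coincide: p(W^s) = p(W^t). -/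
lemma listPow_succ (W : List ℤ) (s : ℕ) : listPow W (s + 1) = W ++ listPow W s := by
  simp [listPow, List.replicate_succ]

lemma length_listPow (W : List ℤ) (s : ℕ) : (listPow W s).length = s * W.length := by
  induction s with
  | zero => simp [listPow]
  | succ k ih => rw [listPow_succ]; simp [ih]; ring

lemma getElem!_listPow (W : List ℤ) (hW : W ≠ []) (s i : ℕ) (h : i < s * W.length) :
    (listPow W s)[i]! = W[i % W.length]! := by
  induction s generalizing i with
  | zero => omega
  | succ k ih =>
    rw [listPow_succ]
    by_cases hi : i < W.length
    · rw [getElem!_pos (W ++ listPow W k) i (by simp; omega), List.getElem_append_left hi,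
        Nat.mod_eq_of_lt hi, getElem!_pos W i hi]
    · push_neg at hi
      have hk : i - W.length < k * W.length := by
        have h2 : (k + 1) * W.length = k * W.length + W.length := by ring
        omega
      rw [getElem!_pos (W ++ listPow W k) i (by simp [length_listPow]; omega),
        List.getElem_append_right hi, Nat.mod_eq_sub_mod hi,
        ← getElem!_pos (listPow W k) (i - W.length) (by simp [length_listPow]; omega)]
      exact ih _ hk

/-- Characterization of small periods of powers, independent of the exponent. -/
lemma hasPeriod_listPow_iff (W : List ℤ) (hW : W ≠ []) (s p : ℕ) (hs : 2 ≤ s)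
    (hp1 : 1 ≤ p) (hpn : p ≤ W.length) :
    HasPeriod (listPow W s) p ↔ ∀ r < W.length, W[r]! = W[(r + p) % W.length]! := by
  have hn : 0 < W.length := List.length_pos_iff.mpr hW
  constructor
  · rintro ⟨-, -, h⟩ r hr
    have hrp : r + p < s * W.length := by
      have : 2 * W.length ≤ s * W.length := Nat.mul_le_mul_right _ hs
      omega
    have := h r (by rw [length_listPow]; exact hrp)
    rwa [getElem!_listPow W hW s r (by omega), Nat.mod_eq_of_lt hr,
      getElem!_listPow W hW s (r + p) hrp] at this
  · intro h
    refine ⟨hp1, ?_, ?_⟩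
    · rw [length_listPow]
      calc p ≤ W.length := hpn
        _ ≤ s * W.length := Nat.le_mul_of_pos_left _ (by omega)
    · intro i hi
      rw [length_listPow] at hi
      rw [getElem!_listPow W hW s i (by omega), getElem!_listPow W hW s (i + p) hi]
      have := h (i % W.length) (Nat.mod_lt _ hn)
      rwa [Nat.mod_add_mod] at this

lemma hasPeriod_listPow_len (W : List ℤ) (hW : W ≠ []) (s : ℕ) (hs : 2 ≤ s) :
    HasPeriod (listPow W s) W.length := by
  have hn : 0 < W.length := List.length_pos_iff.mpr hW
  rw [hasPeriod_listPow_iff W hW s _ hs hn le_rfl]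
  intro r hr
  rw [Nat.add_mod_right, Nat.mod_eq_of_lt hr]

lemma minPeriod_listPow_le (W : List ℤ) (hW : W ≠ []) (s t : ℕ)
    (hs : 2 ≤ s) (ht : 2 ≤ t) :
    minPeriod (listPow W s) ≤ minPeriod (listPow W t) := by
  have hn : 0 < W.length := List.length_pos_iff.mpr hW
  have hne : {p | HasPeriod (listPow W t) p}.Nonempty :=
    ⟨W.length, hasPeriod_listPow_len W hW t ht⟩
  have hmem : minPeriod (listPow W t) ∈ {p | HasPeriod (listPow W t) p} :=
    Nat.sInf_mem hne
  have hle : minPeriod (listPow W t) ≤ W.length :=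
    Nat.sInf_le (hasPeriod_listPow_len W hW t ht)
  have h1 : 1 ≤ minPeriod (listPow W t) := hmem.1
  have := (hasPeriod_listPow_iff W hW t _ ht h1 hle).mp hmem
  exact Nat.sInf_le ((hasPeriod_listPow_iff W hW s _ hs h1 hle).mpr this)

/-- For a nonempty `W` and `s, t ≥ 2`, the shortest periods of the powers coincide:
`p(W^s) = p(W^t)`. -/
theorem minPeriod_pow_eq (W : List ℤ) (hW : W ≠ []) (s t : ℕ)
    (hs : 2 ≤ s) (ht : 2 ≤ t) :
    minPeriod (listPow W s) = minPeriod (listPow W t) := by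
  exact le_antisymm (minPeriod_listPow_le W hW s t hs ht)
    (minPeriod_listPow_le W hW t s ht hs)
end
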